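/- arXiv:2604.12153 — 3 statements merged into one kernel-verified Lean document; each statement's English description precedes it below -/
import Mathlib

section
/- Let U ⊆ ℝ × ℝⁿ be open, let ρ : ℝ × ℝⁿ → ℝ be twice continuously differentiable and strictly positive on U, let b : ℝ × ℝⁿ → ℝⁿ be continuously differentiable on U, and let A : ℝⁿ → ℝⁿ be a continuous linear map. Define the score-corrected velocity field ṽ(t,x) := b(t,x) − A(∇ₓ log ρ(t,x)) on U. Then at every point (t,x) ∈ U, the Fokker–Planck identity ∂ₜρ(t,x) + divₓ(ρ b)(t,x) = divₓ(y ↦ A(∇ₓρ(t,y)))(x) holds if and only if the continuity-equation identity ∂ₜρ(t,x) + divₓ(ρ ṽ)(t,x) = 0 holds, where divₓ denotes the divergence in the spatial variable of the corresponding time-frozen map. -/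
/-!
Where `ρ > 0` the score satisfies `ρ • ∇ log ρ = ∇ρ`, so near the point the flux `ρ ṽ` coincides with
`ρ b - A ∇ρ`. The divergence depends only on the germ of a field and is additive on fields
differentiable at the point, hence `divₓ(ρ ṽ) = divₓ(ρ b) - divₓ(A ∇ₓρ)`, which turns one identity into
the other.
-/

noncomputable def divg {n : ℕ}
    (w : EuclideanSpace ℝ (Fin n) → EuclideanSpace ℝ (Fin n))
    (x : EuclideanSpace ℝ (Fin n)) : ℝ :=
  LinearMap.trace ℝ (EuclideanSpace ℝ (Fin n)) (fderiv ℝ w x).toLinearMap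

open Filter Topology InnerProductSpace
open scoped Gradient

section Gradient

variable {F : Type*} [NormedAddCommGroup F] [InnerProductSpace ℝ F] [CompleteSpace F]
  {f : F → ℝ} {f' x : F}

theorem HasGradientAt.log (hf : HasGradientAt f f' x) (hx : f x ≠ 0) :
    HasGradientAt (fun y => Real.log (f y)) ((f x)⁻¹ • f') x := by
  rw [hasGradientAt_iff_hasFDerivAt, map_smul]
  exact (hasGradientAt_iff_hasFDerivAt.mp hf).log hx

theorem ContDiffAt.differentiableAt_gradient (hf : ContDiffAt ℝ 2 f x) :
    DifferentiableAt ℝ (∇ f) x :=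
  (toDual ℝ F).symm.differentiable.differentiableAt.comp x
    ((hf.fderiv_right le_rfl).differentiableAt one_ne_zero)

end Gradient

theorem ContDiffOn.contDiffAt_comp_prodMk {𝕜 E F G : Type*} [NontriviallyNormedField 𝕜]
    [NormedAddCommGroup E] [NormedSpace 𝕜 E] [NormedAddCommGroup F] [NormedSpace 𝕜 F]
    [NormedAddCommGroup G] [NormedSpace 𝕜 G] {f : E × F → G} {s : Set (E × F)}
    {k : WithTop ℕ∞} (hf : ContDiffOn 𝕜 k f s) (hs : IsOpen s) {t : E} {y : F}
    (hy : (t, y) ∈ s) : ContDiffAt 𝕜 k (fun z => f (t, z)) y :=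
  (hf.contDiffAt (hs.mem_nhds hy)).comp y (contDiff_prodMk_right t).contDiffAt

section Divergence

variable {n : ℕ} {v w : EuclideanSpace ℝ (Fin n) → EuclideanSpace ℝ (Fin n)}
  {x : EuclideanSpace ℝ (Fin n)}

theorem Filter.EventuallyEq.divg_eq (h : v =ᶠ[𝓝 x] w) : divg v x = divg w x := by
  rw [divg, divg, h.fderiv_eq]

theorem divg_sub (hv : DifferentiableAt ℝ v x) (hw : DifferentiableAt ℝ w x) :
    divg (fun y => v y - w y) x = divg v x - divg w x := by
  rw [divg, divg, divg, fderiv_fun_sub hv hw, ContinuousLinearMap.toLinearMap_sub, map_sub]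

theorem divg_smul_sub_score {f : EuclideanSpace ℝ (Fin n) → ℝ}
    (A : EuclideanSpace ℝ (Fin n) →L[ℝ] EuclideanSpace ℝ (Fin n))
    (hf : ContDiffAt ℝ 2 f x) (hf₀ : ∀ᶠ y in 𝓝 x, f y ≠ 0) (hw : DifferentiableAt ℝ w x) :
    divg (fun y => f y • (w y - A (∇ (fun z => Real.log (f z)) y))) x
      = divg (fun y => f y • w y) x - divg (fun y => A (∇ f y)) x := by
  have hflux : (fun y => f y • (w y - A (∇ (fun z => Real.log (f z)) y)))
      =ᶠ[𝓝 x] fun y => f y • w y - A (∇ f y) := by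
    filter_upwards [hf₀, hf.eventually (by simp)] with y hy hfy
    have hdf : DifferentiableAt ℝ f y := hfy.differentiableAt (by norm_num)
    rw [(hdf.hasGradientAt.log hy).gradient, smul_sub, map_smul, smul_smul,
      mul_inv_cancel₀ hy, one_smul]
  rw [hflux.divg_eq]
  exact divg_sub ((hf.differentiableAt (by norm_num)).smul hw)
    (A.differentiableAt.comp x hf.differentiableAt_gradient)

end Divergence

/-- **Fokker–Planck transformation.** On an open set where the
density `ρ` is `C²` and positive and the drift `b` is `C¹`, with the
score-corrected velocity field `ṽ = b − A ∇ₓ log ρ`, the Fokker–Planck identity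
`∂ₜρ + divₓ(ρ b) = divₓ(A ∇ₓ ρ)` holds at a point iff the continuity-equation
identity `∂ₜρ + divₓ(ρ ṽ) = 0` holds there. -/
theorem stmt6 (n : ℕ) (U : Set (ℝ × EuclideanSpace ℝ (Fin n))) (hU : IsOpen U)
    (ρ : ℝ × EuclideanSpace ℝ (Fin n) → ℝ)
    (hρ : ContDiffOn ℝ 2 ρ U) (hpos : ∀ p ∈ U, 0 < ρ p)
    (b : ℝ × EuclideanSpace ℝ (Fin n) → EuclideanSpace ℝ (Fin n))
    (hb : ContDiffOn ℝ 1 b U)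
    (A : EuclideanSpace ℝ (Fin n) →L[ℝ] EuclideanSpace ℝ (Fin n))
    (vtil : ℝ × EuclideanSpace ℝ (Fin n) → EuclideanSpace ℝ (Fin n))
    (hv : ∀ p ∈ U, vtil p
      = b p - A (gradient (fun y => Real.log (ρ (p.1, y))) p.2)) :
    ∀ p ∈ U,
      ((deriv (fun s => ρ (s, p.2)) p.1
          + divg (fun y => ρ (p.1, y) • b (p.1, y)) p.2
        = divg (fun y => A (gradient (fun z => ρ (p.1, z)) y)) p.2)
      ↔ (deriv (fun s => ρ (s, p.2)) p.1
          + divg (fun y => ρ (p.1, y) • vtil (p.1, y)) p.2 = 0)) := by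
  rintro ⟨t, x⟩ hp
  have hslice : ∀ᶠ y in 𝓝 x, (t, y) ∈ U :=
    (Continuous.prodMk_right t).continuousAt.preimage_mem_nhds (hU.mem_nhds hp)
  have hflux : divg (fun y => ρ (t, y) • vtil (t, y)) x
      = divg (fun y => ρ (t, y) • (b (t, y) - A (∇ (fun z => Real.log (ρ (t, z))) y))) x :=
    EventuallyEq.divg_eq <| hslice.mono fun y hy => congrArg (ρ (t, y) • ·) (hv _ hy)
  rw [hflux, divg_smul_sub_score A (hρ.contDiffAt_comp_prodMk hU hp)
    (hslice.mono fun y hy => (hpos _ hy).ne')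
    ((hb.contDiffAt_comp_prodMk hU hp).differentiableAt one_ne_zero), ← add_sub_assoc,
    sub_eq_zero]
end

section
/- Let A : ℝⁿ → ℝⁿ be a symmetric continuous linear map, let ρ : ℝⁿ → ℝ be continuously differentiable and strictly positive, let b : ℝⁿ → ℝⁿ be continuous, and let φ : ℝⁿ → ℝ be twice continuously differentiable with compact support. Then ∫_{ℝⁿ} ⟨b(x) − A(∇(log ∘ ρ)(x)), ∇φ(x)⟩ ρ(x) dx = ∫_{ℝⁿ} ( ⟨b(x), ∇φ(x)⟩ + div(y ↦ A(∇φ(y)))(x) ) ρ(x) dx; that is, the first-order generator of the score-corrected deterministic dynamics with velocity b − A ∇ log ρ agrees, in expectation against the density ρ, with the second-order generator ⟨b, ∇φ⟩ + tr(A Hess φ) of the diffusion. -/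
open MeasureTheory
open scoped RealInnerProductSpace

lemma stein_aux_trace {n : ℕ} (T : EuclideanSpace ℝ (Fin n) →ₗ[ℝ] EuclideanSpace ℝ (Fin n)) :
    LinearMap.trace ℝ _ T = ∑ i, T (EuclideanSpace.single i (1:ℝ)) i := by
  rw [LinearMap.trace_eq_matrix_trace ℝ (EuclideanSpace.basisFun (Fin n) ℝ).toBasis, Matrix.trace]
  simp [Matrix.diag, LinearMap.toMatrix_apply, EuclideanSpace.basisFun_repr]

lemma stein_aux_decomp {n : ℕ} (v : EuclideanSpace ℝ (Fin n)) :
    ∑ i, v i • EuclideanSpace.single i (1:ℝ) = v := by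
  classical
  ext j
  have : ((∑ i, v i • EuclideanSpace.single i (1:ℝ)) : EuclideanSpace ℝ (Fin n)) j
      = ∑ i, (v i • EuclideanSpace.single i (1:ℝ) : EuclideanSpace ℝ (Fin n)) j :=
    by rw [WithLp.ofLp_sum, Finset.sum_apply]
  rw [this]
  simp [EuclideanSpace.single_apply]

noncomputable def steinTraceLM (n : ℕ) :
    (EuclideanSpace ℝ (Fin n) →L[ℝ] EuclideanSpace ℝ (Fin n)) →ₗ[ℝ] ℝ :=
  (LinearMap.trace ℝ (EuclideanSpace ℝ (Fin n))).comp (ContinuousLinearMap.coeLM ℝ)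

open InnerProductSpace in
/-- **Stein-type identity.** For a symmetric continuous linear map
`A`, a `C¹` strictly positive density `ρ`, a continuous drift `b`, and a `C²`
compactly supported test function `φ`, the first-order generator of the
score-corrected dynamics `b − A ∇ log ρ` agrees in expectation against `ρ` with
the second-order generator `⟨b, ∇φ⟩ + div(A ∇φ)` of the diffusion. -/
theorem stmt8 (n : ℕ)
    (A : EuclideanSpace ℝ (Fin n) →L[ℝ] EuclideanSpace ℝ (Fin n))
    (hA : ∀ u v : EuclideanSpace ℝ (Fin n), ⟪A u, v⟫ = ⟪u, A v⟫)
    (ρ : EuclideanSpace ℝ (Fin n) → ℝ) (hρ : ContDiff ℝ 1 ρ)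
    (hpos : ∀ x : EuclideanSpace ℝ (Fin n), 0 < ρ x)
    (b : EuclideanSpace ℝ (Fin n) → EuclideanSpace ℝ (Fin n)) (hb : Continuous b)
    (φ : EuclideanSpace ℝ (Fin n) → ℝ) (hφ : ContDiff ℝ 2 φ)
    (hsupp : HasCompactSupport φ) :
    ∫ x : EuclideanSpace ℝ (Fin n),
        ⟪b x - A (gradient (Real.log ∘ ρ) x), gradient φ x⟫ * ρ x
      = ∫ x : EuclideanSpace ℝ (Fin n),
          (⟪b x, gradient φ x⟫ + divg (fun y => A (gradient φ y)) x) * ρ x := by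
  classical
  have hρd : Differentiable ℝ ρ := hρ.differentiable one_ne_zero
  have hφd : Differentiable ℝ φ := hφ.differentiable two_ne_zero
  set e : Fin n → EuclideanSpace ℝ (Fin n) := fun i => EuclideanSpace.single i (1:ℝ) with he
  set w : EuclideanSpace ℝ (Fin n) → EuclideanSpace ℝ (Fin n) :=
    fun x => A (gradient φ x) with hw_def
  -- regularity of gradient φ and w
  have hf1 : ContDiff ℝ 1 (fderiv ℝ φ) := hφ.fderiv_right le_rfl
  have hgrad_cd : ContDiff ℝ 1 (gradient φ) := by
    exact ((toDual ℝ (EuclideanSpace ℝ (Fin n))).symm.contDiff).comp hf1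
  have hw_cd : ContDiff ℝ 1 w := A.contDiff.comp hgrad_cd
  have hw_diff : Differentiable ℝ w := hw_cd.differentiable one_ne_zero
  have hw_cont : Continuous w := hw_cd.continuous
  -- compact supports
  have hsupp_fφ : HasCompactSupport (fderiv ℝ φ) := hsupp.fderiv ℝ
  have hsupp_grad : HasCompactSupport (gradient φ) :=
    hsupp_fφ.comp_left
      (g := fun L : EuclideanSpace ℝ (Fin n) →L[ℝ] ℝ =>
        (toDual ℝ (EuclideanSpace ℝ (Fin n))).symm L) (by simp)
  have hsupp_w : HasCompactSupport w :=
    hsupp_grad.comp_left (g := fun v => A v) (map_zero A)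
  have hsupp_fw : HasCompactSupport (fderiv ℝ w) := hsupp_w.fderiv ℝ
  have hfw_cont : Continuous (fderiv ℝ w) := hw_cd.continuous_fderiv one_ne_zero
  have hgrad_cont : Continuous (gradient φ) := hgrad_cd.continuous
  have hρ_cont : Continuous ρ := hρ.continuous
  have hfρ_cont : Continuous (fderiv ℝ ρ) := hρ.continuous_fderiv one_ne_zero
  -- coordinate functions
  have hcoord_fderiv : ∀ (i : Fin n) (x : EuclideanSpace ℝ (Fin n)) (v : EuclideanSpace ℝ (Fin n)),
      fderiv ℝ (fun y => w y i) x v = (fderiv ℝ w x v) i := by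
    intro i x v
    have h := ((EuclideanSpace.proj i).hasFDerivAt.comp x (hw_diff x).hasFDerivAt).fderiv
    have h2 : fderiv ℝ (fun y => (EuclideanSpace.proj (𝕜 := ℝ) i) (w y)) x
        = (EuclideanSpace.proj i).comp (fderiv ℝ w x) := h
    calc fderiv ℝ (fun y => w y i) x v
        = ((EuclideanSpace.proj (𝕜 := ℝ) i).comp (fderiv ℝ w x)) v := by rw [← h2]; rfl
      _ = (fderiv ℝ w x v) i := rfl
  -- divergence as a sum
  have hdiv_sum : ∀ x, divg w x = ∑ i, fderiv ℝ (fun y => w y i) x (e i) := by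
    intro x
    rw [divg, stein_aux_trace]
    exact Finset.sum_congr rfl fun i _ => by rw [hcoord_fderiv]; rfl
  -- inner with gradient is fderiv
  have hinner_grad : ∀ (f : EuclideanSpace ℝ (Fin n) → ℝ) (x v : EuclideanSpace ℝ (Fin n)),
      ⟪gradient f x, v⟫ = fderiv ℝ f x v := fun f x v => toDual_symm_apply
  -- score identity
  have hscore : ∀ x, gradient (Real.log ∘ ρ) x = (ρ x)⁻¹ • gradient ρ x := by
    intro x
    have h3 : HasFDerivAt (fun y => Real.log (ρ y)) ((ρ x)⁻¹ • fderiv ℝ ρ x) x :=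
      (hρd x).hasFDerivAt.log (hpos x).ne'
    have h5 : gradient (Real.log ∘ ρ) x
        = (toDual ℝ (EuclideanSpace ℝ (Fin n))).symm ((ρ x)⁻¹ • fderiv ℝ ρ x) :=
      h3.hasGradientAt.gradient
    rw [h5, LinearIsometryEquiv.map_smul]
    rfl
  -- LHS integrand rewrite
  have hLHS : ∀ x, ⟪b x - A (gradient (Real.log ∘ ρ) x), gradient φ x⟫ * ρ x
      = ⟪b x, gradient φ x⟫ * ρ x - fderiv ℝ ρ x (w x) := by
    intro x
    rw [inner_sub_left, sub_mul]
    congr 1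
    rw [hscore, A.map_smul, real_inner_smul_left, hA, hinner_grad]
    simp only [hw_def]
    field_simp
    exact mul_div_cancel_left₀ _ (hpos x).ne'
  -- integrability
  have hint : ∀ (f : EuclideanSpace ℝ (Fin n) → ℝ), Continuous f → HasCompactSupport f →
      Integrable f := fun f hc hs => hc.integrable_of_hasCompactSupport hs
  have hI1 : Integrable (fun x => ⟪b x, gradient φ x⟫ * ρ x) := by
    refine hint _ ((hb.inner hgrad_cont).mul hρ_cont) (hsupp_grad.mono ?_)
    intro x hx
    simp only [Function.mem_support] at hx ⊢
    intro h0
    apply hx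
    simp [h0]
  have hI2 : Integrable (fun x => fderiv ℝ ρ x (w x)) := by
    refine hint _ (hfρ_cont.clm_apply hw_cont) (hsupp_w.mono ?_)
    intro x hx
    simp only [Function.mem_support] at hx ⊢
    intro h0
    apply hx
    simp [h0]
  have hdivg_cont : Continuous (divg w) := by
    have hT : Continuous (steinTraceLM n) := LinearMap.continuous_of_finiteDimensional _
    exact hT.comp hfw_cont
  have hI3 : Integrable (fun x => divg w x * ρ x) := by
    refine hint _ (hdivg_cont.mul hρ_cont) (hsupp_fw.mono ?_)
    intro x hx
    simp only [Function.mem_support] at hx ⊢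
    intro h0
    apply hx
    simp [divg, h0]
  -- per-coordinate integrable facts
  have hwi_cont : ∀ i : Fin n, Continuous fun x => w x i := fun i =>
    (EuclideanSpace.proj (𝕜 := ℝ) i).continuous.comp hw_cont
  have hIa : ∀ i : Fin n, Integrable (fun x => fderiv ℝ ρ x (e i) * w x i) := by
    intro i
    refine hint _ (((hfρ_cont.clm_apply continuous_const)).mul (hwi_cont i)) (hsupp_w.mono ?_)
    intro x hx
    simp only [Function.mem_support] at hx ⊢
    intro h0
    apply hx
    simp [h0]
  have hIb : ∀ i : Fin n, Integrable (fun x => ρ x * fderiv ℝ (fun y => w y i) x (e i)) := by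
    intro i
    have heq : (fun x => ρ x * fderiv ℝ (fun y => w y i) x (e i))
        = fun x => ρ x * (fderiv ℝ w x (e i)) i := by
      funext x; rw [hcoord_fderiv]
    rw [heq]
    refine hint _ (hρ_cont.mul ((EuclideanSpace.proj (𝕜 := ℝ) i).continuous.comp
      (hfw_cont.clm_apply continuous_const))) (hsupp_fw.mono ?_)
    intro x hx
    simp only [Function.mem_support] at hx ⊢
    intro h0
    apply hx
    simp [h0]
  have hIc : ∀ i : Fin n, Integrable (fun x => ρ x * w x i) := by
    intro i
    refine hint _ (hρ_cont.mul (hwi_cont i)) (hsupp_w.mono ?_)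
    intro x hx
    simp only [Function.mem_support] at hx ⊢
    intro h0
    apply hx
    simp [h0]
  -- per-coordinate integration by parts
  have key : ∀ i : Fin n, ∫ x, ρ x * fderiv ℝ (fun y => w y i) x (e i)
      = - ∫ x, fderiv ℝ ρ x (e i) * w x i := by
    intro i
    exact integral_mul_fderiv_eq_neg_fderiv_mul_of_integrable (hIa i) (hIb i) (hIc i)
      (fun x _ => hρd x) (fun x _ => ((EuclideanSpace.proj (𝕜 := ℝ) i).differentiable.comp hw_diff) x)
  -- the main integration-by-parts identity
  have hdone : ∫ x, divg w x * ρ x = - ∫ x, fderiv ℝ ρ x (w x) := by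
    calc ∫ x, divg w x * ρ x
        = ∫ x, ∑ i, ρ x * fderiv ℝ (fun y => w y i) x (e i) := by
          congr 1; funext x
          rw [hdiv_sum x, Finset.sum_mul]
          exact Finset.sum_congr rfl fun i _ => mul_comm _ _
      _ = ∑ i, ∫ x, ρ x * fderiv ℝ (fun y => w y i) x (e i) :=
          integral_finset_sum _ fun i _ => hIb i
      _ = ∑ i, -( ∫ x, fderiv ℝ ρ x (e i) * w x i) := Finset.sum_congr rfl fun i _ => key i
      _ = - ∑ i, ∫ x, fderiv ℝ ρ x (e i) * w x i := by rw [Finset.sum_neg_distrib]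
      _ = - ∫ x, ∑ i, fderiv ℝ ρ x (e i) * w x i := by
          rw [integral_finset_sum _ fun i _ => hIa i]
      _ = - ∫ x, fderiv ℝ ρ x (w x) := by
          congr 1; congr 1; funext x
          conv_rhs => rw [← stein_aux_decomp (w x)]
          rw [map_sum]
          exact Finset.sum_congr rfl fun i _ => by
            rw [(fderiv ℝ ρ x).map_smul, smul_eq_mul, mul_comm]
  -- conclude
  have hL : (fun x => ⟪b x - A (gradient (Real.log ∘ ρ) x), gradient φ x⟫ * ρ x)
      = fun x => ⟪b x, gradient φ x⟫ * ρ x - fderiv ℝ ρ x (w x) := funext hLHS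
  have hR : (fun x => (⟪b x, gradient φ x⟫ + divg w x) * ρ x)
      = fun x => ⟪b x, gradient φ x⟫ * ρ x + divg w x * ρ x := by
    funext x; ring
  rw [hL, hR, integral_sub hI1 hI2, integral_add hI1 hI3, hdone]
  ring
end

section
/- Let A : ℝⁿ → ℝⁿ be a symmetric continuous linear map, let ρ : ℝⁿ → ℝ be continuously differentiable and strictly positive, and let λ : ℝⁿ → ℝⁿ be a continuously differentiable vector field with compact support. Then ∫_{ℝⁿ} ⟨λ(x), A(∇(log ∘ ρ)(x))⟩ ρ(x) dx = − ∫_{ℝⁿ} tr(Dλ(x) ∘ A) ρ(x) dx, where Dλ(x) is the Fréchet derivative of λ at x and both integrals are with respect to the Lebesgue measure on ℝⁿ. -/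
/-!
Since `A` is symmetric and `∇ (log ∘ ρ) = ρ⁻¹ ∇ρ`, the left integrand is `Dρ(x) (A (λ x))`.
Integrating by parts in each coordinate of a basis turns `∫ Dρ(x) (V x)` into `-∫ (div V) ρ` for
the compactly supported `C¹` field `V = A ∘ λ`, and `div (A ∘ λ) = tr (A ∘ Dλ) = tr (Dλ ∘ A)`.
-/

open MeasureTheory
open scoped RealInnerProductSpace

section Divergence

variable {E : Type*} [NormedAddCommGroup E] [NormedSpace ℝ E]

noncomputable def divergence (V : E → E) (x : E) : ℝ :=
  LinearMap.trace ℝ E (fderiv ℝ V x)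

theorem divergence_clm_comp (A : E →L[ℝ] E) {V : E → E} {x : E} (hV : DifferentiableAt ℝ V x) :
    divergence (A ∘ V) x = LinearMap.trace ℝ E (A.toLinearMap ∘ₗ (fderiv ℝ V x).toLinearMap) := by
  rw [divergence, (A.hasFDerivAt.comp x hV.hasFDerivAt).fderiv]
  rfl

variable [FiniteDimensional ℝ E]

theorem fderiv_basis_repr_apply {ι : Type*} [Fintype ι] (b : Module.Basis ι ℝ E) (i : ι)
    {V : E → E} {x : E} (hV : DifferentiableAt ℝ V x) (v : E) :
    fderiv ℝ (fun y ↦ b.repr (V y) i) x v = b.repr (fderiv ℝ V x v) i := by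
  let c := LinearMap.toContinuousLinearMap (b.coord i)
  change fderiv ℝ (c ∘ V) x v = c (fderiv ℝ V x v)
  rw [(c.hasFDerivAt.comp x hV.hasFDerivAt).fderiv]
  rfl

theorem divergence_eq_sum_fderiv_basis_repr {ι : Type*} [Fintype ι] [DecidableEq ι]
    (b : Module.Basis ι ℝ E) {V : E → E} {x : E} (hV : DifferentiableAt ℝ V x) :
    divergence V x = ∑ i, fderiv ℝ (fun y ↦ b.repr (V y) i) x (b i) := by
  simp only [divergence, LinearMap.trace_eq_matrix_trace ℝ b, Matrix.trace, Matrix.diag_apply,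
    LinearMap.toMatrix_apply, fderiv_basis_repr_apply b _ hV]
  rfl

end Divergence

section IntegrationByParts

variable {E : Type*} [NormedAddCommGroup E] [NormedSpace ℝ E] [FiniteDimensional ℝ E]
  [MeasurableSpace E] [BorelSpace E] {μ : Measure E} [μ.IsAddHaarMeasure]

theorem integral_mul_fderiv_eq_neg_fderiv_mul_of_hasCompactSupport {f g : E → ℝ}
    (hf : ContDiff ℝ 1 f) (hf_supp : HasCompactSupport f) (hg : ContDiff ℝ 1 g) (v : E) :
    ∫ x, f x * fderiv ℝ g x v ∂μ = -∫ x, fderiv ℝ f x v * g x ∂μ := by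
  have hf' : HasCompactSupport (fun x ↦ fderiv ℝ f x v) := hf_supp.fderiv_apply (𝕜 := ℝ) v
  have hdf : Continuous (fun x ↦ fderiv ℝ f x v) :=
    (hf.continuous_fderiv one_ne_zero).clm_apply continuous_const
  have hdg : Continuous (fun x ↦ fderiv ℝ g x v) :=
    (hg.continuous_fderiv one_ne_zero).clm_apply continuous_const
  refine integral_mul_fderiv_eq_neg_fderiv_mul_of_integrable ?_ ?_ ?_
    (fun x _ ↦ hf.differentiable one_ne_zero x) (fun x _ ↦ hg.differentiable one_ne_zero x)
  · exact (hdf.mul hg.continuous).integrable_of_hasCompactSupport hf'.mul_right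
  · exact (hf.continuous.mul hdg).integrable_of_hasCompactSupport hf_supp.mul_right
  · exact (hf.continuous.mul hg.continuous).integrable_of_hasCompactSupport hf_supp.mul_right

theorem integral_fderiv_apply_eq_neg_integral_divergence_mul {ρ : E → ℝ} {V : E → E}
    (hρ : ContDiff ℝ 1 ρ) (hV : ContDiff ℝ 1 V) (hV_supp : HasCompactSupport V) :
    ∫ x, fderiv ℝ ρ x (V x) ∂μ = -∫ x, divergence V x * ρ x ∂μ := by
  let b := Module.finBasis ℝ E
  set Vc : Fin (Module.finrank ℝ E) → E → ℝ := fun i y ↦ b.repr (V y) i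
  have hVc : ∀ i, ContDiff ℝ 1 (Vc i) := fun i ↦
    (LinearMap.toContinuousLinearMap (b.coord i)).contDiff.comp hV
  have hVc_supp : ∀ i, HasCompactSupport (Vc i) := fun i ↦
    hV_supp.comp_left (g := fun v ↦ b.repr v i) (by simp)
  have hexpand : ∀ x, fderiv ℝ ρ x (V x) = ∑ i, Vc i x * fderiv ℝ ρ x (b i) := fun x ↦ by
    conv_lhs => rw [← b.sum_repr (V x)]
    simp only [map_sum, map_smul, smul_eq_mul, Vc]
  have hint_coord : ∀ i, Integrable (fun x ↦ Vc i x * fderiv ℝ ρ x (b i)) μ := fun i ↦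
    ((hVc i).continuous.mul ((hρ.continuous_fderiv one_ne_zero).clm_apply continuous_const))
      |>.integrable_of_hasCompactSupport (hVc_supp i).mul_right
  have hint_div : ∀ i, Integrable (fun x ↦ fderiv ℝ (Vc i) x (b i) * ρ x) μ := fun i ↦
    ((((hVc i).continuous_fderiv one_ne_zero).clm_apply continuous_const).mul hρ.continuous)
      |>.integrable_of_hasCompactSupport ((hVc_supp i).fderiv_apply (𝕜 := ℝ) (b i)).mul_right
  calc ∫ x, fderiv ℝ ρ x (V x) ∂μ
      = ∑ i, ∫ x, Vc i x * fderiv ℝ ρ x (b i) ∂μ := by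
        simp only [hexpand]
        exact integral_finsetSum _ fun i _ ↦ hint_coord i
    _ = ∑ i, -∫ x, fderiv ℝ (Vc i) x (b i) * ρ x ∂μ := by
        congr! 1 with i
        exact integral_mul_fderiv_eq_neg_fderiv_mul_of_hasCompactSupport (hVc i) (hVc_supp i) hρ _
    _ = -∫ x, divergence V x * ρ x ∂μ := by
        rw [Finset.sum_neg_distrib, ← integral_finsetSum _ fun i _ ↦ hint_div i]
        simp only [divergence_eq_sum_fderiv_basis_repr b (hV.differentiable one_ne_zero _),
          Finset.sum_mul, Vc]

end IntegrationByParts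

section Gradient

variable {F : Type*} [NormedAddCommGroup F] [InnerProductSpace ℝ F] [CompleteSpace F]
  {ρ : F → ℝ} {x : F}

theorem gradient_log_comp (hρ : DifferentiableAt ℝ ρ x) (hx : ρ x ≠ 0) :
    gradient (Real.log ∘ ρ) x = (ρ x)⁻¹ • gradient ρ x := by
  simp [gradient, ((Real.hasDerivAt_log hx).comp_hasFDerivAt x hρ.hasFDerivAt).fderiv]

theorem inner_apply_gradient_log_mul_eq_fderiv {A : F →L[ℝ] F} (hA : A.toLinearMap.IsSymmetric)
    (hρ : DifferentiableAt ℝ ρ x) (hx : ρ x ≠ 0) (v : F) :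
    ⟪v, A (gradient (Real.log ∘ ρ) x)⟫ * ρ x = fderiv ℝ ρ x (A v) := by
  rw [gradient_log_comp hρ hx, map_smul, inner_smul_right, ← hA.apply_clm, real_inner_comm,
    inner_gradient_left]
  field_simp

end Gradient

/-- **vector-field Stein identity.** For a symmetric continuous
linear map `A`, a `C¹` strictly positive density `ρ`, and a `C¹` compactly
supported vector field `λ`,
`∫ ⟨λ, A ∇ log ρ⟩ ρ = − ∫ tr(Dλ ∘ A) ρ` with respect to Lebesgue measure. -/
theorem stmt9 (n : ℕ)
    (A : EuclideanSpace ℝ (Fin n) →L[ℝ] EuclideanSpace ℝ (Fin n))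
    (hA : ∀ u v : EuclideanSpace ℝ (Fin n), ⟪A u, v⟫ = ⟪u, A v⟫)
    (ρ : EuclideanSpace ℝ (Fin n) → ℝ) (hρ : ContDiff ℝ 1 ρ)
    (hpos : ∀ x : EuclideanSpace ℝ (Fin n), 0 < ρ x)
    (lam : EuclideanSpace ℝ (Fin n) → EuclideanSpace ℝ (Fin n))
    (hlam : ContDiff ℝ 1 lam) (hsupp : HasCompactSupport lam) :
    ∫ x : EuclideanSpace ℝ (Fin n),
        ⟪lam x, A (gradient (Real.log ∘ ρ) x)⟫ * ρ x
      = - ∫ x : EuclideanSpace ℝ (Fin n),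
          (LinearMap.trace ℝ (EuclideanSpace ℝ (Fin n))
            ((fderiv ℝ lam x).toLinearMap ∘ₗ A.toLinearMap)) * ρ x := by
  have hρ' := hρ.differentiable one_ne_zero
  calc ∫ x, ⟪lam x, A (gradient (Real.log ∘ ρ) x)⟫ * ρ x
      = ∫ x, fderiv ℝ ρ x ((A ∘ lam) x) := by
        simp only [inner_apply_gradient_log_mul_eq_fderiv hA (hρ' _) (hpos _).ne',
          Function.comp_apply]
    _ = -∫ x, divergence (A ∘ lam) x * ρ x :=
        integral_fderiv_apply_eq_neg_integral_divergence_mul hρ (A.contDiff.comp hlam)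
          (hsupp.comp_left A.map_zero)
    _ = _ := by
        simp only [divergence_clm_comp A (hlam.differentiable one_ne_zero _),
          LinearMap.trace_comp_comm' (fderiv ℝ lam _).toLinearMap]
end
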